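/- Let (α, N, B, κ_g, τ_g) be a Frenet apparatus of a timelike unit speed non-geodesic curve in S³₁, and let p ∈ S³₁ satisfy ⟨p, N(s)⟩ = 0 for all s ∈ ℝ (α is a timelike rectifying curve with respect to p). Then there exist constants μ₁, μ₂ ∈ ℝ with μ₂² − μ₁² < 1 such that τ_g(s)/κ_g(s) = μ₁·sinh(s) + μ₂·cosh(s) for all s ∈ ℝ. -/

import Mathlib

/-!
Put `a = ⟨p, α⟩`, `b = ⟨p, T⟩`, `c = ⟨p, B⟩`. Differentiating with the Frenet equations and
`⟨p, N⟩ = 0` gives `a' = b`, `b' = a`, `c' = 0` and `κ_g b + τ_g c = 0`, so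
`b = a(0) sinh + b(0) cosh` and `c` is constant. Expanding `p` in the frame `(α, T, N, B)` gives
`a² - b² + c² = 1`, which forces `c ≠ 0`; then `τ_g / κ_g = -b / c`, and
`μ₁ = -a(0)/c`, `μ₂ = -b(0)/c` satisfy `μ₂² - μ₁² = 1 - 1/c² < 1`.
-/

open Real

/-- The Minkowski scalar product on `ℝ⁴₁`:
`⟨x,y⟩ = -x₁y₁ + x₂y₂ + x₃y₃ + x₄y₄`. -/
noncomputable def mdot (x y : Fin 4 → ℝ) : ℝ :=
  -(x 0 * y 0) + x 1 * y 1 + x 2 * y 2 + x 3 * y 3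

namespace LinearMap.BilinForm

open Module in
theorem apply_self_eq_sum_of_iIsOrtho {K V ι : Type*} [Field K]
    [AddCommGroup V] [Module K V] [FiniteDimensional K V] [Fintype ι]
    {B : LinearMap.BilinForm K V} {v : ι → V} (hv : B.iIsOrtho v) (hvv : ∀ i, B (v i) (v i) ≠ 0)
    (hcard : Fintype.card ι = finrank K V) (x : V) :
    B x x = ∑ i, B x (v i) ^ 2 / B (v i) (v i) := by
  let b := basisOfLinearIndependentOfCardEqFinrank' v (linearIndependent_of_iIsOrtho hv hvv) hcard
  have hx : ∑ i, b.repr x i • v i = x := by simpa [b] using b.sum_repr x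
  have hcoord : ∀ j, B x (v j) = b.repr x j * B (v j) (v j) := by
    intro j
    conv_lhs => rw [← hx]
    rw [sum_left, Finset.sum_eq_single j]
    · simp
    · intro i _ hij; simp [iIsOrtho_def.1 hv i j hij]
    · simp
  conv_lhs => arg 2; rw [← hx]
  rw [sum_right]
  refine Finset.sum_congr rfl fun j _ => ?_
  rw [smul_right, hcoord j]
  field_simp [hvv j]

end LinearMap.BilinForm

theorem mdot_comm (x y : Fin 4 → ℝ) : mdot x y = mdot y x := by
  simp only [mdot]; ring

theorem mdot_add_right (x y z : Fin 4 → ℝ) : mdot x (y + z) = mdot x y + mdot x z := by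
  simp only [mdot, Pi.add_apply]; ring

theorem mdot_smul_right (c : ℝ) (x y : Fin 4 → ℝ) : mdot x (c • y) = c * mdot x y := by
  simp only [mdot, Pi.smul_apply, smul_eq_mul]; ring

noncomputable def minkowskiForm : LinearMap.BilinForm ℝ (Fin 4 → ℝ) :=
  LinearMap.mk₂ ℝ mdot
    (fun x y z => by rw [mdot_comm, mdot_add_right, mdot_comm z, mdot_comm z])
    (fun c x y => by rw [mdot_comm, mdot_smul_right, mdot_comm, smul_eq_mul])
    mdot_add_right mdot_smul_right

theorem minkowskiForm_apply (x y : Fin 4 → ℝ) : minkowskiForm x y = mdot x y := rfl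

theorem mdot_self_eq_of_orthonormal {u t v w : Fin 4 → ℝ}
    (hu : mdot u u = 1) (ht : mdot t t = -1) (hv : mdot v v = 1) (hw : mdot w w = 1)
    (hut : mdot u t = 0) (huv : mdot u v = 0) (huw : mdot u w = 0)
    (htv : mdot t v = 0) (htw : mdot t w = 0) (hvw : mdot v w = 0) (x : Fin 4 → ℝ) :
    mdot x x = mdot x u ^ 2 - mdot x t ^ 2 + mdot x v ^ 2 + mdot x w ^ 2 := by
  have hortho : minkowskiForm.iIsOrtho ![u, t, v, w] := by
    rw [LinearMap.BilinForm.iIsOrtho_def]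
    intro i j hij
    fin_cases i <;> fin_cases j <;>
      simp_all [minkowskiForm_apply, mdot_comm t u, mdot_comm v u,
        mdot_comm w u, mdot_comm v t, mdot_comm w t, mdot_comm w v]
  have hnorm : ∀ i, minkowskiForm (![u, t, v, w] i) (![u, t, v, w] i) ≠ 0 := by
    intro i; fin_cases i <;> simp [minkowskiForm_apply, hu, ht, hv, hw]
  have h := minkowskiForm.apply_self_eq_sum_of_iIsOrtho hortho hnorm (by simp) x
  simp only [minkowskiForm_apply, Fin.sum_univ_four, Matrix.cons_val, hu, ht, hv, hw] at h
  rw [h]; ring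

theorem HasDerivAt.const_mdot (p : Fin 4 → ℝ) {f : ℝ → Fin 4 → ℝ} {v : Fin 4 → ℝ} {s : ℝ}
    (hf : HasDerivAt f v s) : HasDerivAt (fun t => mdot p (f t)) (mdot p v) s :=
  (LinearMap.toContinuousLinearMap (minkowskiForm p)).hasFDerivAt.comp_hasDerivAt s hf

theorem eq_mul_exp_of_hasDerivAt {u : ℝ → ℝ} {k : ℝ} (hu : ∀ s, HasDerivAt u (k * u s) s)
    (s : ℝ) : u s = u 0 * exp (k * s) := by
  have hderiv : ∀ t, HasDerivAt (fun t => u t * exp (-(k * t))) 0 t := fun t =>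
    ((hu t).fun_mul ((hasDerivAt_id' t).const_mul k).fun_neg.exp).congr_deriv (by ring)
  have := is_const_of_deriv_eq_zero (fun t => (hderiv t).differentiableAt)
    (fun t => (hderiv t).deriv) s 0
  simp only [mul_zero, neg_zero, exp_zero, mul_one] at this
  rw [← this, mul_assoc, ← exp_add, neg_add_cancel, exp_zero, mul_one]

theorem eq_sinh_cosh_of_hasDerivAt {f g : ℝ → ℝ} (hf : ∀ s, HasDerivAt f (g s) s)
    (hg : ∀ s, HasDerivAt g (f s) s) (s : ℝ) : g s = f 0 * sinh s + g 0 * cosh s := by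
  have hplus := eq_mul_exp_of_hasDerivAt (u := f + g) (k := 1)
    (fun t => ((hf t).add (hg t)).congr_deriv (by simp [add_comm])) s
  have hminus := eq_mul_exp_of_hasDerivAt (u := f - g) (k := -1)
    (fun t => ((hf t).sub (hg t)).congr_deriv (by simp)) s
  simp only [Pi.add_apply, Pi.sub_apply, one_mul, neg_one_mul] at hplus hminus
  rw [sinh_eq, cosh_eq]
  linear_combination (hplus - hminus) / 2

theorem exists_div_eq_sinh_cosh {a b c κ τ : ℝ → ℝ} (ha : ∀ s, HasDerivAt a (b s) s)
    (hb : ∀ s, HasDerivAt b (a s) s) (hc : ∀ s, HasDerivAt c 0 s) (hκ : ∀ s, 0 < κ s)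
    (hrel : ∀ s, κ s * b s + τ s * c s = 0) (hnorm : a 0 ^ 2 - b 0 ^ 2 + c 0 ^ 2 = 1) :
    ∃ μ₁ μ₂ : ℝ, μ₂ ^ 2 - μ₁ ^ 2 < 1 ∧ ∀ s, τ s / κ s = μ₁ * sinh s + μ₂ * cosh s := by
  have hc_const : ∀ s, c s = c 0 := fun s =>
    is_const_of_deriv_eq_zero (fun x => (hc x).differentiableAt) (fun x => (hc x).deriv) s 0
  have hc0 : c 0 ≠ 0 := by
    intro h0
    have hb_zero : b = 0 := funext fun s => by
      simpa [hc_const s, h0, (hκ s).ne'] using hrel s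
    have ha0 : a 0 = 0 := (hb 0).unique (by rw [hb_zero]; exact hasDerivAt_const 0 0)
    simp [ha0, hb_zero, h0] at hnorm
  refine ⟨-a 0 / c 0, -b 0 / c 0, ?_, fun s => ?_⟩
  · rw [div_pow, div_pow, ← sub_div, div_lt_one (by positivity)]
    linarith
  · have hκs := (hκ s).ne'
    field_simp
    linear_combination hrel s - τ s * hc_const s - κ s * eq_sinh_cosh_of_hasDerivAt ha hb s

theorem ratio_of_timelike_rectifying_curve_general
    (α N B : ℝ → Fin 4 → ℝ) (κg τg : ℝ → ℝ)
    (hαsm : ContDiff ℝ (⊤ : ℕ∞) α) (hNsm : ContDiff ℝ (⊤ : ℕ∞) N)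
    (hBsm : ContDiff ℝ (⊤ : ℕ∞) B)
    (hκpos : ∀ s, 0 < κg s)
    (hα1 : ∀ s, mdot (α s) (α s) = 1)
    (hT1 : ∀ s, mdot (deriv α s) (deriv α s) = -1)
    (hN1 : ∀ s, mdot (N s) (N s) = 1)
    (hB1 : ∀ s, mdot (B s) (B s) = 1)
    (hαT : ∀ s, mdot (α s) (deriv α s) = 0)
    (hαN : ∀ s, mdot (α s) (N s) = 0)
    (hαB : ∀ s, mdot (α s) (B s) = 0)
    (hTN : ∀ s, mdot (deriv α s) (N s) = 0)
    (hTB : ∀ s, mdot (deriv α s) (B s) = 0)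
    (hNB : ∀ s, mdot (N s) (B s) = 0)
    (hF1 : ∀ s, deriv (deriv α) s = α s + κg s • N s)
    (hF2 : ∀ s, deriv N s = κg s • deriv α s + τg s • B s)
    (hF3 : ∀ s, deriv B s = -τg s • N s)
    (p : Fin 4 → ℝ) (hp : mdot p p = 1)
    (hrect : ∀ s, mdot p (N s) = 0) :
    ∃ μ₁ μ₂ : ℝ, μ₂ ^ 2 - μ₁ ^ 2 < 1 ∧
      ∀ s, τg s / κg s = μ₁ * Real.sinh s + μ₂ * Real.cosh s := by
  have hα : Differentiable ℝ α := hαsm.differentiable (by simp)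
  have hT : Differentiable ℝ (deriv α) :=
    (contDiff_infty_iff_deriv.mp hαsm).2.differentiable (by simp)
  have hN : Differentiable ℝ N := hNsm.differentiable (by simp)
  have hB : Differentiable ℝ B := hBsm.differentiable (by simp)
  have hp_derivN : ∀ s, mdot p (deriv N s) = 0 := fun s =>
    ((hN s).hasDerivAt.const_mdot p).unique (by simpa only [hrect] using hasDerivAt_const s 0)
  refine exists_div_eq_sinh_cosh (a := fun s => mdot p (α s))
    (b := fun s => mdot p (deriv α s)) (c := fun s => mdot p (B s))
    (fun s => (hα s).hasDerivAt.const_mdot p) (fun s => ?_) (fun s => ?_) hκpos (fun s => ?_) ?_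
  · simpa [hF1, mdot_add_right, mdot_smul_right, hrect] using (hT s).hasDerivAt.const_mdot p
  · simpa [hF3, mdot_smul_right, hrect, -neg_smul] using (hB s).hasDerivAt.const_mdot p
  · simpa [hF2, mdot_add_right, mdot_smul_right] using hp_derivN s
  · have := mdot_self_eq_of_orthonormal (hα1 0) (hT1 0) (hN1 0) (hB1 0) (hαT 0) (hαN 0) (hαB 0)
      (hTN 0) (hTB 0) (hNB 0) p
    rw [hp, hrect 0] at this
    linarith

/-- For a timelike rectifying curve in `S³₁`, the ratio `τ_g/κ_g` is of the form
`μ₁ sinh s + μ₂ cosh s` with `μ₂² - μ₁² < 1`. -/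
theorem ratio_of_timelike_rectifying_curve
    (α N B : ℝ → Fin 4 → ℝ) (κg τg : ℝ → ℝ)
    (hαsm : ContDiff ℝ (⊤ : ℕ∞) α) (hNsm : ContDiff ℝ (⊤ : ℕ∞) N)
    (hBsm : ContDiff ℝ (⊤ : ℕ∞) B)
    (hκsm : ContDiff ℝ (⊤ : ℕ∞) κg) (hτsm : ContDiff ℝ (⊤ : ℕ∞) τg)
    (hκpos : ∀ s, 0 < κg s)
    (hα1 : ∀ s, mdot (α s) (α s) = 1)
    (hT1 : ∀ s, mdot (deriv α s) (deriv α s) = -1)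
    (hN1 : ∀ s, mdot (N s) (N s) = 1)
    (hB1 : ∀ s, mdot (B s) (B s) = 1)
    (hαT : ∀ s, mdot (α s) (deriv α s) = 0)
    (hαN : ∀ s, mdot (α s) (N s) = 0)
    (hαB : ∀ s, mdot (α s) (B s) = 0)
    (hTN : ∀ s, mdot (deriv α s) (N s) = 0)
    (hTB : ∀ s, mdot (deriv α s) (B s) = 0)
    (hNB : ∀ s, mdot (N s) (B s) = 0)
    (hF1 : ∀ s, deriv (deriv α) s = α s + κg s • N s)
    (hF2 : ∀ s, deriv N s = κg s • deriv α s + τg s • B s)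
    (hF3 : ∀ s, deriv B s = -τg s • N s)
    (p : Fin 4 → ℝ) (hp : mdot p p = 1)
    (hrect : ∀ s, mdot p (N s) = 0) :
    ∃ μ₁ μ₂ : ℝ, μ₂ ^ 2 - μ₁ ^ 2 < 1 ∧
      ∀ s, τg s / κg s = μ₁ * Real.sinh s + μ₂ * Real.cosh s :=
  ratio_of_timelike_rectifying_curve_general α N B κg τg hαsm hNsm hBsm hκpos hα1 hT1 hN1 hB1 hαT
    hαN hαB hTN hTB hNB hF1 hF2 hF3 p hp hrect
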